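/- Let $\lambda>0$, $L_m, L_M, \widetilde{L}, N_M, \widetilde{N} > 0$. Let $L_1, L_2, N_1, N_2 : [0,\lambda]\to\mathbb{R}$ be continuous with $L_m \le L_i \le L_M$, $0 < N_i \le N_M$, $\|L_1-L_2\|_\infty \le \widetilde{L}\,\delta$ and $\|N_1-N_2\|_\infty \le \widetilde{N}\,\delta$. Define $I_i(z) = \exp\big(2\int_0^z \sigma N_i(\sigma)/L_i(\sigma)d\sigma\big)$. Then for all $z\in[0,\lambda]$, $|I_1(z)-I_2(z)| \le \frac{\exp(N_M z^2/L_m)}{L_m^2}\, z^2\,(N_M\widetilde{L} + L_m\widetilde{N})\,\delta$. -/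

import Mathlib

/-!
Both exponents are at most `N_M z² / L_m`, so by the mean value theorem for `exp` on
`(-∞, N_M z² / L_m]` the difference `|I₁ z - I₂ z|` is at most `exp (N_M z² / L_m)` times the
difference of the exponents. The integrands differ by at most `σ (N_M L̃ + L_m Ñ) δ / L_m²`,
as one sees from `N₁/L₁ - N₂/L₂ = (N₁ - N₂)/L₁ + N₂ (L₂ - L₁)/(L₁ L₂)`, and integrating `σ`
over `[0, z]` gives the factor `z²/2`.
-/

open Set Real intervalIntegral

lemma abs_exp_sub_exp_le_of_le {a b c : ℝ} (ha : a ≤ c) (hb : b ≤ c) :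
    |exp a - exp b| ≤ exp c * |a - b| := by
  have hderiv : ∀ x ∈ Iic c, ‖deriv exp x‖ ≤ exp c := fun x hx => by
    rw [Real.deriv_exp, Real.norm_eq_abs, abs_of_pos (exp_pos x)]
    exact exp_le_exp.2 hx
  simpa only [Real.norm_eq_abs] using
    (convex_Iic c).norm_image_sub_le_of_norm_deriv_le (fun x _ => differentiableAt_exp)
      hderiv hb ha

lemma abs_div_sub_div_le {N₁ N₂ L₁ L₂ Lm NM a b : ℝ} (hLm : 0 < Lm) (hL₁ : Lm ≤ L₁)
    (hL₂ : Lm ≤ L₂) (hN₂ : 0 ≤ N₂) (hN₂M : N₂ ≤ NM) (hN : |N₁ - N₂| ≤ a)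
    (hL : |L₁ - L₂| ≤ b) :
    |N₁ / L₁ - N₂ / L₂| ≤ (NM * b + Lm * a) / Lm ^ 2 := by
  have hL₁0 : 0 < L₁ := hLm.trans_le hL₁
  have hL₂0 : 0 < L₂ := hLm.trans_le hL₂
  have hsplit : N₁ / L₁ - N₂ / L₂ = (N₁ - N₂) / L₁ + N₂ * (L₂ - L₁) / (L₁ * L₂) := by
    field_simp; ring
  have hfirst : |(N₁ - N₂) / L₁| ≤ a / Lm := by
    rw [abs_div, abs_of_pos hL₁0]
    exact div_le_div₀ ((abs_nonneg _).trans hN) hN hLm hL₁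
  have hsecond : |N₂ * (L₂ - L₁) / (L₁ * L₂)| ≤ NM * b / Lm ^ 2 := by
    rw [abs_div, abs_mul, abs_of_nonneg hN₂, abs_sub_comm, abs_of_pos (mul_pos hL₁0 hL₂0), sq]
    exact div_le_div₀ (mul_nonneg (hN₂.trans hN₂M) ((abs_nonneg _).trans hL))
      (mul_le_mul hN₂M hL (abs_nonneg _) (hN₂.trans hN₂M)) (mul_pos hLm hLm)
      (mul_le_mul hL₁ hL₂ hLm.le hL₁0.le)
  calc |N₁ / L₁ - N₂ / L₂| ≤ a / Lm + NM * b / Lm ^ 2 :=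
        hsplit ▸ (abs_add_le _ _).trans (add_le_add hfirst hsecond)
    _ = (NM * b + Lm * a) / Lm ^ 2 := by field_simp; ring

lemma integral_le_of_le_mul_id {f : ℝ → ℝ} {z C : ℝ} (hz : 0 ≤ z)
    (hf : IntervalIntegrable f MeasureTheory.volume 0 z) (hle : ∀ σ ∈ Icc 0 z, f σ ≤ σ * C) :
    ∫ σ in 0..z, f σ ≤ z ^ 2 / 2 * C :=
  calc ∫ σ in 0..z, f σ ≤ ∫ σ in 0..z, σ * C :=
        integral_mono_on hz hf
          ((by fun_prop : Continuous fun σ : ℝ => σ * C).intervalIntegrable 0 z) hle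
    _ = z ^ 2 / 2 * C := by rw [integral_mul_const, integral_id]; ring

lemma abs_integral_le_of_abs_le_mul_id {f : ℝ → ℝ} {z C : ℝ} (hz : 0 ≤ z)
    (hf : IntervalIntegrable f MeasureTheory.volume 0 z) (hle : ∀ σ ∈ Icc 0 z, |f σ| ≤ σ * C) :
    |∫ σ in 0..z, f σ| ≤ z ^ 2 / 2 * C :=
  (abs_integral_le_integral_abs hz).trans (integral_le_of_le_mul_id hz hf.abs hle)

section Profile

variable {N L : ℝ → ℝ} {lam z : ℝ}

lemma intervalIntegrable_mul_div (hN : ContinuousOn N (Icc 0 lam))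
    (hL : ContinuousOn L (Icc 0 lam)) (hL0 : ∀ σ ∈ Icc 0 lam, L σ ≠ 0) (hz : z ∈ Icc 0 lam) :
    IntervalIntegrable (fun σ => σ * N σ / L σ) MeasureTheory.volume 0 z := by
  have hsub : Icc 0 z ⊆ Icc 0 lam := Icc_subset_Icc_right hz.2
  exact ((continuousOn_id.mul (hN.mono hsub)).div (hL.mono hsub) fun σ hσ => hL0 σ (hsub hσ))
    |>.intervalIntegrable_of_Icc hz.1

lemma two_mul_integral_mul_div_le {Lm NM : ℝ} (hLm : 0 < Lm) (hz : z ∈ Icc 0 lam)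
    (hint : IntervalIntegrable (fun σ => σ * N σ / L σ) MeasureTheory.volume 0 z)
    (hL : ∀ σ ∈ Icc 0 lam, Lm ≤ L σ) (hN : ∀ σ ∈ Icc 0 lam, 0 < N σ ∧ N σ ≤ NM) :
    2 * ∫ σ in 0..z, σ * N σ / L σ ≤ NM * z ^ 2 / Lm := by
  have hbound : ∀ σ ∈ Icc 0 z, σ * N σ / L σ ≤ σ * (NM / Lm) := fun σ hσ => by
    have hσ' : σ ∈ Icc 0 lam := Icc_subset_Icc_right hz.2 hσ
    rw [mul_div_assoc]
    exact mul_le_mul_of_nonneg_left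
      (div_le_div₀ ((hN σ hσ').1.le.trans (hN σ hσ').2) (hN σ hσ').2 hLm (hL σ hσ')) hσ.1
  have := integral_le_of_le_mul_id hz.1 hint hbound
  calc 2 * ∫ σ in 0..z, σ * N σ / L σ ≤ 2 * (z ^ 2 / 2 * (NM / Lm)) := by linarith
    _ = NM * z ^ 2 / Lm := by ring

end Profile

lemma abs_integral_mul_div_sub_le {N₁ N₂ L₁ L₂ : ℝ → ℝ} {lam z Lm NM a b : ℝ} (hLm : 0 < Lm)
    (hz : z ∈ Icc 0 lam)
    (hint₁ : IntervalIntegrable (fun σ => σ * N₁ σ / L₁ σ) MeasureTheory.volume 0 z)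
    (hint₂ : IntervalIntegrable (fun σ => σ * N₂ σ / L₂ σ) MeasureTheory.volume 0 z)
    (hL₁ : ∀ σ ∈ Icc 0 lam, Lm ≤ L₁ σ) (hL₂ : ∀ σ ∈ Icc 0 lam, Lm ≤ L₂ σ)
    (hN₂ : ∀ σ ∈ Icc 0 lam, 0 < N₂ σ ∧ N₂ σ ≤ NM)
    (hL : ∀ σ ∈ Icc 0 lam, |L₁ σ - L₂ σ| ≤ b) (hN : ∀ σ ∈ Icc 0 lam, |N₁ σ - N₂ σ| ≤ a) :
    |(∫ σ in 0..z, σ * N₁ σ / L₁ σ) - ∫ σ in 0..z, σ * N₂ σ / L₂ σ|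
      ≤ z ^ 2 / 2 * ((NM * b + Lm * a) / Lm ^ 2) := by
  rw [← integral_sub hint₁ hint₂]
  refine abs_integral_le_of_abs_le_mul_id hz.1 (hint₁.sub hint₂) fun σ hσ => ?_
  have hσ' : σ ∈ Icc 0 lam := Icc_subset_Icc_right hz.2 hσ
  rw [mul_div_assoc, mul_div_assoc, ← mul_sub, abs_mul, abs_of_nonneg hσ.1]
  exact mul_le_mul_of_nonneg_left (abs_div_sub_div_le hLm (hL₁ σ hσ') (hL₂ σ hσ')
    (hN₂ σ hσ').1.le (hN₂ σ hσ').2 (hN σ hσ') (hL σ hσ')) hσ.1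

theorem stmt_5_general (lam Lm LM Lt NM Nt δ : ℝ)
    (hLm : 0 < Lm)
    (L₁ L₂ N₁ N₂ : ℝ → ℝ)
    (hL₁c : ContinuousOn L₁ (Set.Icc 0 lam)) (hL₂c : ContinuousOn L₂ (Set.Icc 0 lam))
    (hN₁c : ContinuousOn N₁ (Set.Icc 0 lam)) (hN₂c : ContinuousOn N₂ (Set.Icc 0 lam))
    (hL₁ : ∀ z ∈ Set.Icc (0:ℝ) lam, Lm ≤ L₁ z ∧ L₁ z ≤ LM)
    (hL₂ : ∀ z ∈ Set.Icc (0:ℝ) lam, Lm ≤ L₂ z ∧ L₂ z ≤ LM)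
    (hN₁ : ∀ z ∈ Set.Icc (0:ℝ) lam, 0 < N₁ z ∧ N₁ z ≤ NM)
    (hN₂ : ∀ z ∈ Set.Icc (0:ℝ) lam, 0 < N₂ z ∧ N₂ z ≤ NM)
    (hLdiff : ∀ z ∈ Set.Icc (0:ℝ) lam, |L₁ z - L₂ z| ≤ Lt * δ)
    (hNdiff : ∀ z ∈ Set.Icc (0:ℝ) lam, |N₁ z - N₂ z| ≤ Nt * δ)
    (I₁ I₂ : ℝ → ℝ)
    (hI₁ : ∀ z ∈ Set.Icc (0:ℝ) lam, I₁ z = Real.exp (2 * ∫ σ in (0:ℝ)..z, σ * N₁ σ / L₁ σ))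
    (hI₂ : ∀ z ∈ Set.Icc (0:ℝ) lam, I₂ z = Real.exp (2 * ∫ σ in (0:ℝ)..z, σ * N₂ σ / L₂ σ)) :
    ∀ z ∈ Set.Icc (0:ℝ) lam,
      |I₁ z - I₂ z| ≤
        Real.exp (NM * z ^ 2 / Lm) / Lm ^ 2 * z ^ 2 * (NM * Lt + Lm * Nt) * δ := by
  intro z hz
  have hint₁ := intervalIntegrable_mul_div hN₁c hL₁c
    (fun σ hσ => (hLm.trans_le (hL₁ σ hσ).1).ne') hz
  have hint₂ := intervalIntegrable_mul_div hN₂c hL₂c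
    (fun σ hσ => (hLm.trans_le (hL₂ σ hσ).1).ne') hz
  have hexponent₁ := two_mul_integral_mul_div_le hLm hz hint₁ (fun σ hσ => (hL₁ σ hσ).1) hN₁
  have hexponent₂ := two_mul_integral_mul_div_le hLm hz hint₂ (fun σ hσ => (hL₂ σ hσ).1) hN₂
  have hdiff := abs_integral_mul_div_sub_le hLm hz hint₁ hint₂ (fun σ hσ => (hL₁ σ hσ).1)
    (fun σ hσ => (hL₂ σ hσ).1) hN₂ hLdiff hNdiff
  rw [hI₁ z hz, hI₂ z hz]
  calc _ ≤ exp (NM * z ^ 2 / Lm) * |2 * (∫ σ in 0..z, σ * N₁ σ / L₁ σ)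
          - 2 * ∫ σ in 0..z, σ * N₂ σ / L₂ σ| := abs_exp_sub_exp_le_of_le hexponent₁ hexponent₂
    _ = exp (NM * z ^ 2 / Lm) * (2 * |(∫ σ in 0..z, σ * N₁ σ / L₁ σ)
          - ∫ σ in 0..z, σ * N₂ σ / L₂ σ|) := by rw [← mul_sub, abs_mul, abs_two]
    _ ≤ exp (NM * z ^ 2 / Lm)
          * (2 * (z ^ 2 / 2 * ((NM * (Lt * δ) + Lm * (Nt * δ)) / Lm ^ 2))) := by gcongr
    _ = _ := by ring

theorem stmt_5 (lam Lm LM Lt NM Nt δ : ℝ) (hlam : 0 < lam)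
    (hLm : 0 < Lm) (hLM : 0 < LM) (hLt : 0 < Lt) (hNM : 0 < NM) (hNt : 0 < Nt)
    (hδ : 0 ≤ δ)
    (L₁ L₂ N₁ N₂ : ℝ → ℝ)
    (hL₁c : ContinuousOn L₁ (Set.Icc 0 lam)) (hL₂c : ContinuousOn L₂ (Set.Icc 0 lam))
    (hN₁c : ContinuousOn N₁ (Set.Icc 0 lam)) (hN₂c : ContinuousOn N₂ (Set.Icc 0 lam))
    (hL₁ : ∀ z ∈ Set.Icc (0:ℝ) lam, Lm ≤ L₁ z ∧ L₁ z ≤ LM)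
    (hL₂ : ∀ z ∈ Set.Icc (0:ℝ) lam, Lm ≤ L₂ z ∧ L₂ z ≤ LM)
    (hN₁ : ∀ z ∈ Set.Icc (0:ℝ) lam, 0 < N₁ z ∧ N₁ z ≤ NM)
    (hN₂ : ∀ z ∈ Set.Icc (0:ℝ) lam, 0 < N₂ z ∧ N₂ z ≤ NM)
    (hLdiff : ∀ z ∈ Set.Icc (0:ℝ) lam, |L₁ z - L₂ z| ≤ Lt * δ)
    (hNdiff : ∀ z ∈ Set.Icc (0:ℝ) lam, |N₁ z - N₂ z| ≤ Nt * δ)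
    (I₁ I₂ : ℝ → ℝ)
    (hI₁ : ∀ z ∈ Set.Icc (0:ℝ) lam, I₁ z = Real.exp (2 * ∫ σ in (0:ℝ)..z, σ * N₁ σ / L₁ σ))
    (hI₂ : ∀ z ∈ Set.Icc (0:ℝ) lam, I₂ z = Real.exp (2 * ∫ σ in (0:ℝ)..z, σ * N₂ σ / L₂ σ)) :
    ∀ z ∈ Set.Icc (0:ℝ) lam,
      |I₁ z - I₂ z| ≤
        Real.exp (NM * z ^ 2 / Lm) / Lm ^ 2 * z ^ 2 * (NM * Lt + Lm * Nt) * δ :=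
  stmt_5_general lam Lm LM Lt NM Nt δ hLm L₁ L₂ N₁ N₂ hL₁c hL₂c hN₁c hN₂c hL₁ hL₂ hN₁ hN₂ hLdiff
    hNdiff I₁ I₂ hI₁ hI₂
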